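/- Let X = ℓ₁ⁿ, Y a real normed space, Z a closed subspace of Y, and T : X → Y a bounded linear operator such that there is an extreme point x₀ of B_X with ‖Tx₀‖ = ‖T‖ and a norm-one functional y* ∈ Z^⊥ with y*(Tx₀) = ‖Tx₀‖. Then d(T, L(X,Z)) = sup_{x ∈ S_X} d(Tx, Z) = d(Tx₀, Z) = ‖T‖, with the supremum attained at the extreme point x₀. -/

import Mathlib

/-!
A norm-one functional `g` vanishing on `Z` gives `g (T x₀) = g (T x₀ - z) ≤ ‖T x₀ - z‖` for every
`z ∈ Z`, so `d(T x₀, Z) ≥ ‖T x₀‖ = ‖T‖`. Every other quantity in the statement lies between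
`d(T x₀, Z)` and `‖T‖`: `d(T x, Z) ≤ ‖T x‖ ≤ ‖T‖` for `‖x‖ ≤ 1`, and
`d(T x₀, Z) ≤ ‖(T - S) x₀‖ ≤ ‖T - S‖` whenever `S` takes values in `Z`. The supremum over the unit
sphere is attained at `x₀` because extreme points of the unit ball lie on the sphere.
-/

open NormedSpace Metric

section Annihilator

variable {E : Type*} [NormedAddCommGroup E] [NormedSpace ℝ E]

theorem Submodule.infDist_le_norm (Z : Submodule ℝ E) (y : E) : infDist y (Z : Set E) ≤ ‖y‖ := by
  simpa using infDist_le_dist_of_mem (x := y) Z.zero_mem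

theorem Submodule.infDist_eq_norm_of_norming_annihilator (Z : Submodule ℝ E)
    {g : StrongDual ℝ E} (hg : ‖g‖ ≤ 1) (hgZ : ∀ z ∈ Z, g z = 0) {y : E} (hgy : g y = ‖y‖) :
    infDist y (Z : Set E) = ‖y‖ := by
  refine (Z.infDist_le_norm y).antisymm ((le_infDist ⟨0, Z.zero_mem⟩).2 fun z hz => ?_)
  calc ‖y‖ = g (y - z) := by rw [map_sub, hgZ z hz, hgy, sub_zero]
    _ ≤ ‖g‖ * ‖y - z‖ := (le_abs_self _).trans (g.le_opNorm _)
    _ ≤ ‖y - z‖ := mul_le_of_le_one_left (norm_nonneg _) hg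
    _ = dist y z := (dist_eq_norm _ _).symm

end Annihilator

section Operator

variable {X Y : Type*} [NormedAddCommGroup X] [NormedSpace ℝ X]
  [NormedAddCommGroup Y] [NormedSpace ℝ Y]

theorem infDist_apply_le_opNorm_sub {Z : Submodule ℝ Y} (T S : X →L[ℝ] Y) (hS : ∀ x, S x ∈ Z)
    {x : X} (hx : ‖x‖ ≤ 1) : infDist (T x) (Z : Set Y) ≤ ‖T - S‖ :=
  calc infDist (T x) (Z : Set Y) ≤ dist (T x) (S x) := infDist_le_dist_of_mem (hS x)
    _ = ‖(T - S) x‖ := by rw [dist_eq_norm, sub_apply]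
    _ ≤ ‖T - S‖ * 1 := (T - S).le_opNorm_of_le hx
    _ = ‖T - S‖ := mul_one _

theorem infDist_apply_le_opNorm {Z : Submodule ℝ Y} (T : X →L[ℝ] Y) {x : X} (hx : ‖x‖ ≤ 1) :
    infDist (T x) (Z : Set Y) ≤ ‖T‖ := by
  simpa using infDist_apply_le_opNorm_sub T 0 (fun _ => Z.zero_mem) hx

end Operator

theorem stmt_18_general
    {n : ℕ} {Y : Type*} [NormedAddCommGroup Y] [NormedSpace ℝ Y]
    (Z : Subspace ℝ Y)
    (T : PiLp 1 (fun _ : Fin n => ℝ) →L[ℝ] Y)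
    (x₀ : PiLp 1 (fun _ : Fin n => ℝ))
    (hx₀ : x₀ ∈ Set.extremePoints ℝ (Metric.closedBall (0 : PiLp 1 (fun _ : Fin n => ℝ)) 1))
    (hTx₀ : ‖T x₀‖ = ‖T‖)
    (g : StrongDual ℝ Y) (hg : ‖g‖ = 1) (hgZ : ∀ z ∈ Z, g z = 0)
    (hgy : g (T x₀) = ‖T x₀‖) :
    sInf {r : ℝ | ∃ S : PiLp 1 (fun _ : Fin n => ℝ) →L[ℝ] Y,
        (∀ x, S x ∈ Z) ∧ r = ‖T - S‖} = ‖T‖ ∧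
    sSup {r : ℝ | ∃ x : PiLp 1 (fun _ : Fin n => ℝ),
        ‖x‖ = 1 ∧ r = Metric.infDist (T x) (Z : Set Y)} = ‖T‖ ∧
    Metric.infDist (T x₀) (Z : Set Y) = ‖T‖ := by
  have hx₀_le : ‖x₀‖ ≤ 1 := mem_closedBall_zero_iff.1 hx₀.1
  have hdist : infDist (T x₀) (Z : Set Y) = ‖T‖ := by
    rw [Z.infDist_eq_norm_of_norming_annihilator hg.le hgZ hgy, hTx₀]
  refine ⟨IsLeast.csInf_eq ⟨⟨0, fun _ => Z.zero_mem, by rw [sub_zero]⟩, ?_⟩, ?_, hdist⟩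
  · rintro _ ⟨S, hS, rfl⟩
    exact hdist ▸ infDist_apply_le_opNorm_sub T S hS hx₀_le
  have hbdd : ∀ r ∈ {r : ℝ | ∃ x : PiLp 1 (fun _ : Fin n => ℝ),
      ‖x‖ = 1 ∧ r = infDist (T x) (Z : Set Y)}, r ≤ ‖T‖ := by
    rintro _ ⟨x, hx, rfl⟩
    exact infDist_apply_le_opNorm T hx.le
  refine (Real.sSup_le hbdd (norm_nonneg T)).antisymm ?_
  rcases subsingleton_or_nontrivial (PiLp 1 (fun _ : Fin n => ℝ)) with _ | _
  · rw [T.opNorm_subsingleton]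
    exact Real.sSup_nonneg (by rintro _ ⟨x, -, rfl⟩; exact infDist_nonneg)
  · have hx₀_norm : ‖x₀‖ = 1 := by
      simpa using extremePoints_closedBall_subset_sphere hx₀
    exact le_csSup ⟨‖T‖, hbdd⟩ ⟨x₀, hx₀_norm, hdist.symm⟩

theorem stmt_18
    {n : ℕ} {Y : Type*} [NormedAddCommGroup Y] [NormedSpace ℝ Y]
    (Z : Subspace ℝ Y) (hZ : IsClosed (Z : Set Y))
    (T : PiLp 1 (fun _ : Fin n => ℝ) →L[ℝ] Y)
    (x₀ : PiLp 1 (fun _ : Fin n => ℝ))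
    (hx₀ : x₀ ∈ Set.extremePoints ℝ (Metric.closedBall (0 : PiLp 1 (fun _ : Fin n => ℝ)) 1))
    (hTx₀ : ‖T x₀‖ = ‖T‖)
    (g : StrongDual ℝ Y) (hg : ‖g‖ = 1) (hgZ : ∀ z ∈ Z, g z = 0)
    (hgy : g (T x₀) = ‖T x₀‖) :
    sInf {r : ℝ | ∃ S : PiLp 1 (fun _ : Fin n => ℝ) →L[ℝ] Y,
        (∀ x, S x ∈ Z) ∧ r = ‖T - S‖} = ‖T‖ ∧
    sSup {r : ℝ | ∃ x : PiLp 1 (fun _ : Fin n => ℝ),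
        ‖x‖ = 1 ∧ r = Metric.infDist (T x) (Z : Set Y)} = ‖T‖ ∧
    Metric.infDist (T x₀) (Z : Set Y) = ‖T‖ :=
  stmt_18_general Z T x₀ hx₀ hTx₀ g hg hgZ hgy
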